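/- arXiv:1403.6347 — 5 statements merged into one kernel-verified Lean document; each statement's English description precedes it below -/
import Mathlib

section
/- Let G be a graph with n vertices, let k, ℓ be positive integers, and let α, β be proper k-colourings of G. Define A_0 = {v : α(v) ≠ β(v)} and, for i ≥ 1, A_i = ⋃_{u ∈ A_{i-1}} {v ∈ N(u) : |{w ∈ N(u) : α(w) = α(v)}| ≤ ℓ}. If there exists a recolouring sequence of length ℓ from α to β, then |A_0| ≤ ℓ, and the set A* = A_0 ∪ A_1 ∪ ... ∪ A_{ℓ-1} satisfies |A*| ≤ ℓ · (k·ℓ)^ℓ. -/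
/-!
Each step of a recolouring sequence changes one vertex, so `α` and `β` differ on at most `ℓ`
vertices. A vertex `u` has at most `ℓ` neighbours in each colour class of `N(u)` that is small
enough to contribute, hence at most `k·ℓ` contributing neighbours; so `|A_i| ≤ ℓ·(kℓ)^i`, and
summing this geometric bound over `i < ℓ` gives `ℓ·(kℓ)^ℓ` because `ℓ ≤ kℓ`.
-/

open Finset

lemma card_filter_ne_le_of_forall_exists_eq {V β : Type*} [Fintype V] [DecidableEq V]
    [DecidableEq β] (c : ℕ → V → β) (n : ℕ)
    (hstep : ∀ q < n, ∃ x, ∀ v, v ≠ x → c q v = c (q + 1) v) :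
    ∀ q ≤ n, #{v | c 0 v ≠ c q v} ≤ q := by
  intro q
  induction q with
  | zero => simp
  | succ q ih =>
    intro hq
    obtain ⟨x, hx⟩ := hstep q (by omega)
    have hsub : ({v | c 0 v ≠ c (q + 1) v} : Finset V) ⊆
        insert x ({v | c 0 v ≠ c q v} : Finset V) := by
      intro v hv
      rw [mem_insert, mem_filter_univ]
      by_cases hvx : v = x
      · exact Or.inl hvx
      · exact Or.inr fun h ↦ ((mem_filter_univ v).mp hv) (h.trans (hx v hvx))
    calc #{v | c 0 v ≠ c (q + 1) v}
      _ ≤ #(insert x ({v | c 0 v ≠ c q v} : Finset V)) := card_le_card hsub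
      _ ≤ #{v | c 0 v ≠ c q v} + 1 := card_insert_le _ _
      _ ≤ q + 1 := by have := ih (by omega); omega

lemma card_filter_card_colourClass_le {V ι : Type*} [Fintype ι] [DecidableEq ι]
    (N : Finset V) (α : V → ι) (ℓ : ℕ) :
    #{v ∈ N | #{w ∈ N | α w = α v} ≤ ℓ} ≤ Fintype.card ι * ℓ := by
  rw [mul_comm, ← card_univ]
  refine card_le_mul_card_image_of_maps_to (f := α) (fun _ _ ↦ mem_univ _) ℓ fun i _ ↦ ?_
  rw [filter_filter]
  obtain hempty | ⟨v, hv⟩ :=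
    ({v ∈ N | #{w ∈ N | α w = α v} ≤ ℓ ∧ α v = i} : Finset V).eq_empty_or_nonempty
  · simp [hempty]
  · -- every vertex of colour `i` in the set lies in the colour class of `v`, which is small
    obtain ⟨-, hsmall, rfl⟩ := mem_filter.mp hv
    refine le_trans (card_le_card fun w hw ↦ ?_) hsmall
    simp only [mem_filter] at hw ⊢
    exact ⟨hw.1, hw.2.2⟩

lemma sum_range_pow_le_pow_of_le {n d : ℕ} (h : n ≤ d) : ∑ i ∈ range n, d ^ i ≤ d ^ n := by
  obtain _ | m := n
  · simp
  · calc ∑ i ∈ range (m + 1), d ^ i ≤ ∑ _i ∈ range (m + 1), d ^ m :=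
          sum_le_sum fun i hi ↦ Nat.pow_le_pow_right (by omega) (by simp at hi; omega)
      _ = (m + 1) * d ^ m := by simp
      _ ≤ d * d ^ m := Nat.mul_le_mul_right _ h
      _ = d ^ (m + 1) := by ring

lemma card_le_mul_pow_of_eq_biUnion {V : Type*} [DecidableEq V] (A : ℕ → Finset V)
    (f : V → Finset V) (d : ℕ) (hf : ∀ u, #(f u) ≤ d) (hA : ∀ i, A (i + 1) = (A i).biUnion f)
    (i : ℕ) : #(A i) ≤ #(A 0) * d ^ i := by
  induction i with
  | zero => simp
  | succ i ih =>
    calc #(A (i + 1)) ≤ #(A i) * d := hA i ▸ card_biUnion_le_card_mul _ _ _ fun u _ ↦ hf u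
      _ ≤ #(A 0) * d ^ i * d := Nat.mul_le_mul_right _ ih
      _ = #(A 0) * d ^ (i + 1) := by ring

theorem stmt_3_general {V : Type*} [Fintype V] [DecidableEq V] (G : SimpleGraph V)
    [DecidableRel G.Adj] (k ℓ : ℕ) (hk : 0 < k)
    (α β : V → Fin k)
    (A : ℕ → Finset V)
    (hA0 : A 0 = Finset.univ.filter (fun v : V => α v ≠ β v))
    (hAi : ∀ i : ℕ, A (i + 1) = (A i).biUnion (fun u =>
      (G.neighborFinset u).filter (fun v =>
        ((G.neighborFinset u).filter (fun w => α w = α v)).card ≤ ℓ)))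
    (c : ℕ → V → Fin k) (hc0 : c 0 = α) (hcℓ : c ℓ = β)
    (hstep : ∀ q < ℓ, ∃ x : V, ∀ v : V, v ≠ x → c q v = c (q + 1) v) :
    (A 0).card ≤ ℓ ∧ ((Finset.range ℓ).biUnion A).card ≤ ℓ * (k * ℓ) ^ ℓ := by
  have hA0card : #(A 0) ≤ ℓ := by
    simpa only [hA0, hc0, hcℓ] using card_filter_ne_le_of_forall_exists_eq c ℓ hstep ℓ le_rfl
  have hlayer (i : ℕ) : #(A i) ≤ ℓ * (k * ℓ) ^ i :=
    (card_le_mul_pow_of_eq_biUnion A _ (k * ℓ)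
      (fun u ↦ by simpa using card_filter_card_colourClass_le (G.neighborFinset u) α ℓ)
      hAi i).trans (Nat.mul_le_mul_right _ hA0card)
  refine ⟨hA0card, ?_⟩
  calc #((range ℓ).biUnion A) ≤ ∑ i ∈ range ℓ, ℓ * (k * ℓ) ^ i :=
        card_biUnion_le.trans (sum_le_sum fun i _ ↦ hlayer i)
    _ = ℓ * ∑ i ∈ range ℓ, (k * ℓ) ^ i := (mul_sum _ _ _).symm
    _ ≤ ℓ * (k * ℓ) ^ ℓ :=
        Nat.mul_le_mul_left _ (sum_range_pow_le_pow_of_le (Nat.le_mul_of_pos_left ℓ hk))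

/-- if a recolouring sequence of length `ℓ` between proper
`k`-colourings `α` and `β` exists, then `|A₀| ≤ ℓ` and
`|A*| = |A₀ ∪ … ∪ A_{ℓ-1}| ≤ ℓ·(kℓ)^ℓ`, where `A₀` is the disagreement set of
`α` and `β` and `A_{i} = ⋃_{u ∈ A_{i-1}} {v ∈ N(u) : |N(u,v)| ≤ ℓ}`. -/
theorem stmt_3 {V : Type*} [Fintype V] [DecidableEq V] (G : SimpleGraph V)
    [DecidableRel G.Adj] (k ℓ : ℕ) (hk : 0 < k) (hℓ : 0 < ℓ)
    (α β : V → Fin k)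
    (hα : ∀ u v : V, G.Adj u v → α u ≠ α v)
    (hβ : ∀ u v : V, G.Adj u v → β u ≠ β v)
    (A : ℕ → Finset V)
    (hA0 : A 0 = Finset.univ.filter (fun v : V => α v ≠ β v))
    (hAi : ∀ i : ℕ, A (i + 1) = (A i).biUnion (fun u =>
      (G.neighborFinset u).filter (fun v =>
        ((G.neighborFinset u).filter (fun w => α w = α v)).card ≤ ℓ)))
    (c : ℕ → V → Fin k) (hc0 : c 0 = α) (hcℓ : c ℓ = β)
    (hproper : ∀ q ≤ ℓ, ∀ u v : V, G.Adj u v → c q u ≠ c q v)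
    (hstep : ∀ q < ℓ, ∃ x : V, ∀ v : V, v ≠ x → c q v = c (q + 1) v) :
    (A 0).card ≤ ℓ ∧ ((Finset.range ℓ).biUnion A).card ≤ ℓ * (k * ℓ) ^ ℓ :=
  stmt_3_general G k ℓ hk α β A hA0 hAi c hc0 hcℓ hstep
end

section
/- Let G be a graph and c a proper 3-colouring of G with colours {1,2,3}. If C is a cycle in G all of whose vertices, when traversed in order, are coloured cyclically 1,2,3,1,2,3,...,1,2,3 (so the length of C is divisible by 3), then every vertex of C is fixed with respect to c: for every proper 3-colouring c' reachable from c by a sequence of single-vertex recolourings through proper 3-colourings, c'(v) = c(v) for all v on C. -/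
/-- A colouring is proper if adjacent vertices receive different colours. -/
def ProperColouring {V α : Type*} (G : SimpleGraph V) (c : V → α) : Prop :=
  ∀ u v : V, G.Adj u v → c u ≠ c v

/-- A single-vertex recolouring step: the new colouring is proper and differs
from the old one on exactly one vertex. -/
def RecolStep {V α : Type*} (G : SimpleGraph V) (c d : V → α) : Prop :=
  ProperColouring G d ∧ ∃ x : V, c x ≠ d x ∧ ∀ v : V, v ≠ x → c v = d v

/-! Under `c`, each vertex of the cycle sees both other colours on its two cycle-neighbours.
While a colouring agrees with `c` on such a set, no vertex of the set can be recoloured, since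
any new colour is already taken by a neighbour; so the set never changes colour. -/

section Recolouring

variable {V α : Type*} {G : SimpleGraph V}

def Locked (G : SimpleGraph V) (c : V → α) (S : Set V) : Prop :=
  ∀ v ∈ S, ∀ a, a ≠ c v → ∃ u ∈ S, G.Adj v u ∧ c u = a

theorem RecolStep.eqOn_of_locked {c b d : V → α} {S : Set V} (hS : Locked G c S)
    (hb : Set.EqOn b c S) (hstep : RecolStep G b d) : Set.EqOn d c S := by
  obtain ⟨hd, x, hx, hother⟩ := hstep
  have hxS : x ∉ S := by
    intro hxS
    obtain ⟨u, huS, hxu, hu⟩ := hS x hxS (d x) (hb hxS ▸ hx.symm)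
    have hux : u ≠ x := fun h => hx (by rw [hb hxS, ← hu, h])
    exact hd x u hxu (by rw [← hother u hux, hb huS, hu])
  intro v hv
  rw [← hother v (ne_of_mem_of_not_mem hv hxS), hb hv]

theorem Locked.eqOn_of_reflTransGen {c c' : V → α} {S : Set V} (hS : Locked G c S)
    (h : Relation.ReflTransGen (RecolStep G) c c') : Set.EqOn c' c S := by
  induction h with
  | refl => exact Set.eqOn_refl c S
  | tail _ hstep ih => exact hstep.eqOn_of_locked hS ih

end Recolouring

theorem ZMod.eq_add_one_or_eq_sub_one_of_ne {a b : ZMod 3} (h : a ≠ b) :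
    a = b + 1 ∨ a = b - 1 := by
  revert a b; decide

theorem locked_range_of_colour_add_one {V : Type*} {G : SimpleGraph V} {c : V → ZMod 3}
    {m : ℕ} (w : ZMod m → V) (hadj : ∀ i, G.Adj (w i) (w (i + 1)))
    (hcol : ∀ i, c (w (i + 1)) = c (w i) + 1) : Locked G c (Set.range w) := by
  rintro _ ⟨j, rfl⟩ a ha
  rcases ZMod.eq_add_one_or_eq_sub_one_of_ne ha with rfl | rfl
  · exact ⟨w (j + 1), Set.mem_range_self _, hadj j, hcol j⟩
  · have hprev : c (w j) = c (w (j - 1)) + 1 := by simpa using hcol (j - 1)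
    refine ⟨w (j - 1), Set.mem_range_self _, by simpa using (hadj (j - 1)).symm, ?_⟩
    rw [hprev, add_sub_cancel_right]

theorem stmt_5_general {V : Type*} (G : SimpleGraph V) (c : V → ZMod 3)
    (n : ℕ) (hn : 0 < n)
    (w : ZMod (3 * n) → V)
    (hadj : ∀ i : ZMod (3 * n), G.Adj (w i) (w (i + 1)))
    (hcol : ∀ i : ZMod (3 * n), c (w i) = (i.val : ZMod 3)) :
    ∀ c' : V → ZMod 3, Relation.ReflTransGen (RecolStep G) c c' →
      ∀ i : ZMod (3 * n), c' (w i) = c (w i) := by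
  have : NeZero (3 * n) := ⟨by omega⟩
  have hdvd : 3 ∣ 3 * n := dvd_mul_right 3 n
  have hcol_cast : ∀ i, c (w i) = ZMod.cast i := fun i => by rw [hcol, ZMod.natCast_val]
  have hlocked : Locked G c (Set.range w) :=
    locked_range_of_colour_add_one w hadj fun i => by
      rw [hcol_cast, hcol_cast, ZMod.cast_add hdvd, ZMod.cast_one hdvd]
  intro c' h i
  exact hlocked.eqOn_of_reflTransGen h (Set.mem_range_self i)

/-- if a cycle of `G` (of length `3n`) is coloured cyclically
`1,2,3,1,2,3,…` by a proper 3-colouring `c`, then every vertex of the cycle is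
fixed: any proper 3-colouring reachable from `c` by single-vertex recolourings
agrees with `c` on the whole cycle. -/
theorem stmt_5 {V : Type*} (G : SimpleGraph V) (c : V → ZMod 3)
    (hc : ProperColouring G c) (n : ℕ) (hn : 0 < n)
    (w : ZMod (3 * n) → V) (hinj : Function.Injective w)
    (hadj : ∀ i : ZMod (3 * n), G.Adj (w i) (w (i + 1)))
    (hcol : ∀ i : ZMod (3 * n), c (w i) = (i.val : ZMod 3)) :
    ∀ c' : V → ZMod 3, Relation.ReflTransGen (RecolStep G) c c' →
      ∀ i : ZMod (3 * n), c' (w i) = c (w i) :=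
  stmt_5_general G c n hn w hadj hcol
end

section
/- Let c and c' be two proper 3-colourings of a graph G that differ on exactly one vertex x. Then for every cycle C of G with a fixed orientation, w(c, C) = w(c', C), where w(·, C) is the sum over the oriented edges of C of the edge weights w(·, x→y) ∈ {−1, 1} with w(·, x→y) ≡ colour(y) − colour(x) mod 3. Consequently, if proper 3-colourings c and d are in the same component of the reconfiguration graph R_3(G), then w(c, C) = w(d, C) for every oriented cycle C. -/
/-- The weight of the oriented edge `x → y` under a 3-colouring `c`: the unique
value in `{-1, 1}` congruent to `c y - c x` modulo 3. -/
def edgeWeight {V : Type*} (c : V → ZMod 3) (x y : V) : ℤ :=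
  if c y - c x = 1 then 1 else -1

/-- The weight of an oriented walk: the sum of the weights of its oriented
edges. -/
def walkWeight {V : Type*} {G : SimpleGraph V} (c : V → ZMod 3) {u v : V}
    (p : G.Walk u v) : ℤ :=
  (p.darts.map (fun d => edgeWeight c d.toProd.1 d.toProd.2)).sum

theorem ZMod.three_eq_neg_add {a b z : ZMod 3} (hab : a ≠ b) (hza : z ≠ a) (hzb : z ≠ b) :
    z = -(a + b) := by
  revert a b z; decide

section Recolouring

variable {V : Type*} {G : SimpleGraph V}

theorem edgeWeight_swap {c : V → ZMod 3} {u v : V} (h : c u ≠ c v) :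
    edgeWeight c v u = -edgeWeight c u v := by
  have key : ∀ a b : ZMod 3, a ≠ b →
      (if a - b = 1 then (1 : ℤ) else -1) = -(if b - a = 1 then 1 else -1) := by decide
  exact key _ _ h

theorem ProperColouring.of_reflTransGen {α : Type*} {c d : V → α}
    (h : Relation.ReflTransGen (RecolStep G) c d) (hc : ProperColouring G c) :
    ProperColouring G d := by
  induction h with
  | refl => exact hc
  | tail _ step _ => exact step.1

variable {c c' : V → ZMod 3} {x : V}

theorem eq_neg_add_of_adj_recoloured (hc : ProperColouring G c) (hc' : ProperColouring G c')
    (hx : c x ≠ c' x) (hsame : ∀ v, v ≠ x → c v = c' v) {u : V} (hu : G.Adj u x) :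
    c u = -(c x + c' x) := by
  refine ZMod.three_eq_neg_add hx (hc _ _ hu) ?_
  rw [hsame u hu.ne]
  exact hc' _ _ hu

theorem exists_potential_of_recoloured (hc : ProperColouring G c)
    (hc' : ProperColouring G c') (hx : c x ≠ c' x) (hsame : ∀ v, v ≠ x → c v = c' v) :
    ∃ h : V → ℤ, ∀ u v, G.Adj u v → edgeWeight c u v - edgeWeight c' u v = h v - h u := by
  classical
  obtain ⟨k, hk⟩ : ∃ k : ℤ, ∀ u, G.Adj u x → edgeWeight c u x - edgeWeight c' u x = k :=
    ⟨_, fun u hu => by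
      unfold edgeWeight
      rw [← hsame u hu.ne, eq_neg_add_of_adj_recoloured hc hc' hx hsame hu]⟩
  refine ⟨Pi.single x k, fun u v huv => ?_⟩
  rcases eq_or_ne u x with rfl | hu
  · rw [edgeWeight_swap (hc _ _ huv.symm), edgeWeight_swap (hc' _ _ huv.symm),
      Pi.single_eq_same, Pi.single_eq_of_ne huv.ne.symm, ← hk v huv.symm]
    ring
  rcases eq_or_ne v x with rfl | hv
  · rw [Pi.single_eq_same, Pi.single_eq_of_ne hu, hk u huv, sub_zero]
  unfold edgeWeight
  rw [hsame u hu, hsame v hv, Pi.single_eq_of_ne hu, Pi.single_eq_of_ne hv, sub_self, sub_self]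

theorem walkWeight_cons (c : V → ZMod 3) {u v w : V} (h : G.Adj u v) (p : G.Walk v w) :
    walkWeight c (.cons h p) = edgeWeight c u v + walkWeight c p := by
  simp [walkWeight]

theorem walkWeight_sub_walkWeight_eq {c c' : V → ZMod 3} (h : V → ℤ)
    (hpot : ∀ u v, G.Adj u v → edgeWeight c u v - edgeWeight c' u v = h v - h u)
    {u v : V} (p : G.Walk u v) :
    walkWeight c p - walkWeight c' p = h v - h u := by
  induction p with
  | nil => simp [walkWeight]
  | cons huv q ih =>
    rw [walkWeight_cons, walkWeight_cons]
    linarith [hpot _ _ huv]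

theorem walkWeight_eq_of_recoloured (hc : ProperColouring G c)
    (hc' : ProperColouring G c') (hx : c x ≠ c' x) (hsame : ∀ v, v ≠ x → c v = c' v)
    {v : V} (p : G.Walk v v) :
    walkWeight c p = walkWeight c' p := by
  obtain ⟨h, hpot⟩ := exists_potential_of_recoloured hc hc' hx hsame
  have := walkWeight_sub_walkWeight_eq h hpot p
  rwa [sub_self, sub_eq_zero] at this

end Recolouring

/-- (i) two proper 3-colourings differing on exactly one vertex
give the same weight to every oriented cycle; (ii) consequently proper
3-colourings in the same component of the reconfiguration graph `R₃(G)` give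
the same weight to every oriented cycle. -/
theorem stmt_9 {V : Type*} (G : SimpleGraph V) :
    (∀ c c' : V → ZMod 3, ProperColouring G c → ProperColouring G c' →
      (∃ x : V, c x ≠ c' x ∧ ∀ v : V, v ≠ x → c v = c' v) →
      ∀ (v : V) (p : G.Walk v v), p.IsCycle → walkWeight c p = walkWeight c' p) ∧
    (∀ c d : V → ZMod 3, ProperColouring G c →
      Relation.ReflTransGen (RecolStep G) c d →
      ∀ (v : V) (p : G.Walk v v), p.IsCycle →
        walkWeight c p = walkWeight d p) := by
  refine ⟨fun c c' hc hc' ⟨x, hx, hsame⟩ v p _ => walkWeight_eq_of_recoloured hc hc' hx hsame p,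
    fun c d hc hcd v p _ => ?_⟩
  induction hcd with
  | refl => rfl
  | tail hcb step ih =>
    obtain ⟨hd, x, hx, hsame⟩ := step
    exact ih.trans (walkWeight_eq_of_recoloured (hc.of_reflTransGen hcb) hd hx hsame p)
end

section
/- Let G be a connected graph with base vertex u and let α, β be proper 3-colourings of G. Let R = c_0, ..., c_ℓ be a recolouring sequence from α to β and let H be the associated absolute height function (with H(c_0, ·) ≡ 0 and each single-vertex recolouring changing that vertex's height by ±2 and no others). Then ℓ ≥ (1/2) · Σ_{v ∈ V} |H(β, v)|. -/
/-! Every recolouring step changes the height of a single vertex, by at most 2, so a step raises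
`∑ v, |H v|` by at most 2; as `H 0 ≡ 0`, after `ℓ` steps the sum is at most `2ℓ`. -/

open Finset

section TotalVariation

variable {G : Type*} [AddCommGroup G] [LinearOrder G] [IsOrderedAddMonoid G]

theorem abs_sub_le_sum_range_abs_sub (f : ℕ → G) (n : ℕ) :
    |f n - f 0| ≤ ∑ i ∈ range n, |f (i + 1) - f i| := by
  rw [← sum_range_sub]
  exact abs_sum_le_sum_abs _ _

theorem sum_abs_le_nsmul_of_sum_abs_sub_le {V : Type*} [Fintype V] (H : ℕ → V → G) (n : ℕ)
    (b : G) (h0 : ∀ v, H 0 v = 0) (hstep : ∀ i < n, ∑ v, |H (i + 1) v - H i v| ≤ b) :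
    ∑ v, |H n v| ≤ n • b :=
  calc ∑ v, |H n v|
      ≤ ∑ v, ∑ i ∈ range n, |H (i + 1) v - H i v| := by
        gcongr with v
        simpa [h0] using abs_sub_le_sum_range_abs_sub (H · v) n
    _ = ∑ i ∈ range n, ∑ v, |H (i + 1) v - H i v| := sum_comm
    _ ≤ ∑ _i ∈ range n, b := sum_le_sum fun i hi => hstep i (mem_range.mp hi)
    _ = n • b := by rw [sum_const, card_range]

theorem sum_abs_eq_abs_of_eq_zero_of_ne {V : Type*} [Fintype V] (d : V → G) (x : V)
    (hd : ∀ v, v ≠ x → d v = 0) : ∑ v, |d v| = |d x| :=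
  sum_eq_single x (fun v _ hv => by rw [hd v hv, abs_zero]) (by simp)

end TotalVariation

theorem abs_heightIncrement_le_two (a b : ℤ) :
    |if a = b then (0 : ℤ) else if a ≡ b - 1 [ZMOD 3] then 2 else -2| ≤ 2 := by
  split_ifs <;> norm_num

theorem stmt_12_general {V : Type*} [Fintype V] (ℓ : ℕ)
    (c : ℕ → V → ℤ) (H : ℕ → V → ℤ)
    (hstep : ∀ i < ℓ, ∃ x : V, ∀ v : V, v ≠ x → c i v = c (i + 1) v)
    (hH0 : ∀ v : V, H 0 v = 0)
    (hHrec : ∀ i < ℓ, ∀ v : V, H (i + 1) v - H i v =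
      if c (i + 1) v = c i v then 0
      else if c (i + 1) v ≡ c i v - 1 [ZMOD 3] then 2 else -2) :
    ∑ v : V, |H ℓ v| ≤ 2 * (ℓ : ℤ) := by
  have hstep_le : ∀ i < ℓ, ∑ v, |H (i + 1) v - H i v| ≤ 2 := by
    intro i hi
    obtain ⟨x, hx⟩ := hstep i hi
    rw [sum_abs_eq_abs_of_eq_zero_of_ne _ x fun v hv => by
      rw [hHrec i hi v, if_pos (hx v hv).symm], hHrec i hi x]
    exact abs_heightIncrement_le_two _ _
  simpa [mul_comm] using sum_abs_le_nsmul_of_sum_abs_sub_le H ℓ 2 hH0 hstep_le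

/-- if `R = c 0, …, c ℓ` is a recolouring sequence of proper
3-colourings from `α` to `β` of a connected graph `G`, and `H` is the
associated absolute height function (`H 0 ≡ 0`; each single-vertex recolouring
changes that vertex's height by `±2` — `+2` when the colour decreases by one
mod 3, `-2` when it increases — and no others), then
`ℓ ≥ (1/2) Σ_v |H(β, v)|`. -/
theorem stmt_12 {V : Type*} [Fintype V] (G : SimpleGraph V)
    (hconn : G.Connected) (ℓ : ℕ) (α β : V → ℤ)
    (c : ℕ → V → ℤ) (H : ℕ → V → ℤ)
    (hc0 : c 0 = α) (hcℓ : c ℓ = β)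
    (hrange : ∀ i ≤ ℓ, ∀ v : V, c i v ∈ ({1, 2, 3} : Set ℤ))
    (hproper : ∀ i ≤ ℓ, ∀ u v : V, G.Adj u v → c i u ≠ c i v)
    (hstep : ∀ i < ℓ, ∃ x : V, ∀ v : V, v ≠ x → c i v = c (i + 1) v)
    (hH0 : ∀ v : V, H 0 v = 0)
    (hHrec : ∀ i < ℓ, ∀ v : V, H (i + 1) v - H i v =
      if c (i + 1) v = c i v then 0
      else if c (i + 1) v ≡ c i v - 1 [ZMOD 3] then 2 else -2) :
    ∑ v : V, |H ℓ v| ≤ 2 * (ℓ : ℤ) :=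
  stmt_12_general ℓ c H hstep hH0 hHrec
end

section
/- Let c be a proper 3-colouring of a graph G and let v be a vertex lying on a 'rising path' v_0, v_1, ..., v_t (i.e., c(v_i) ≡ c(v_{i−1}) + 1 mod 3 for all i) such that some v_r with r < t is adjacent to v_t and c(v_r) ≡ c(v_t) + 1 mod 3. Then the vertices v_r, v_{r+1}, ..., v_t form a cycle on which the colours are cyclically 1,2,3 repeated, and hence all of v_r, ..., v_t are fixed with respect to c (no reachable proper 3-colouring recolours any of them). -/
open Relation

lemma ZMod.three_eq_add_one_or_eq_sub_one_of_ne {a b : ZMod 3} (h : b ≠ a) :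
    b = a + 1 ∨ b = a - 1 := by
  revert a b; decide

lemma eq_apply_zero_add_of_forall_succ {R : Type*} [AddMonoidWithOne R] {f : ℕ → R} {t : ℕ}
    (hf : ∀ i < t, f (i + 1) = f i + 1) : ∀ i ≤ t, f i = f 0 + i := by
  intro i hi
  induction i with
  | zero => simp
  | succ i ih => rw [hf i hi, ih (by omega), Nat.cast_succ, add_assoc]

lemma eqOn_of_reflTransGen_recolStep {V α : Type*} {G : SimpleGraph V} {c c' : V → α}
    {S : Set V} (hS : ∀ x ∈ S, ∀ a ≠ c x, ∃ y ∈ S, G.Adj x y ∧ c y = a)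
    (h : ReflTransGen (RecolStep G) c c') : S.EqOn c' c := by
  induction h with
  | refl => exact Set.eqOn_refl c S
  | @tail b d _ step ih =>
    obtain ⟨hd, x, hx, hother⟩ := step
    intro u hu
    by_cases hux : u = x
    · subst hux
      exfalso
      obtain ⟨y, hyS, hadj, hy⟩ := hS u hu (d u) (by rw [← ih hu]; exact hx.symm)
      have hdy : d y = d u := by rw [← hother y (G.ne_of_adj hadj).symm, ih hyS, hy]
      exact hd u y hadj hdy.symm
    · rw [← hother u hux, ih hu]

section RisingCycle

variable {V : Type*} {G : SimpleGraph V} {c : V → ZMod 3} {t r : ℕ} {v : ℕ → V}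
  (hpath : ∀ i < t, G.Adj (v i) (v (i + 1)))
  (hrise : ∀ i < t, c (v (i + 1)) = c (v i) + 1)
  (hchord : G.Adj (v r) (v t)) (hcol : c (v r) = c (v t) + 1)
include hpath hrise hchord hcol

lemma exists_cycle_adj_add_one {i : ℕ} (hri : r ≤ i) (hit : i ≤ t) :
    ∃ j, r ≤ j ∧ j ≤ t ∧ G.Adj (v i) (v j) ∧ c (v j) = c (v i) + 1 := by
  rcases hit.lt_or_eq with hit | rfl
  · exact ⟨i + 1, by omega, hit, hpath i hit, hrise i hit⟩
  · exact ⟨r, le_rfl, hri, hchord.symm, hcol⟩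

lemma exists_cycle_adj_sub_one {i : ℕ} (hri : r ≤ i) (hit : i ≤ t) :
    ∃ j, r ≤ j ∧ j ≤ t ∧ G.Adj (v i) (v j) ∧ c (v j) = c (v i) - 1 := by
  rcases hri.lt_or_eq with hri | rfl
  · obtain ⟨k, rfl⟩ : ∃ k, i = k + 1 := ⟨i - 1, by omega⟩
    exact ⟨k, by omega, by omega, (hpath k (by omega)).symm, by rw [hrise k (by omega)]; ring⟩
  · exact ⟨t, hit, le_rfl, hchord, by rw [hcol]; ring⟩

end RisingCycle

theorem stmt_19_general {V : Type*} (G : SimpleGraph V) (c : V → ZMod 3)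
    (t r : ℕ) (hr : r < t)
    (v : ℕ → V)
    (hpath : ∀ i < t, G.Adj (v i) (v (i + 1)))
    (hrise : ∀ i < t, c (v (i + 1)) = c (v i) + 1)
    (hchord : G.Adj (v r) (v t)) (hcol : c (v r) = c (v t) + 1) :
    3 ∣ (t - r + 1) ∧
      ∀ c' : V → ZMod 3, Relation.ReflTransGen (RecolStep G) c c' →
        ∀ i : ℕ, r ≤ i → i ≤ t → c' (v i) = c (v i) := by
  constructor
  · have hcr := eq_apply_zero_add_of_forall_succ (f := c ∘ v) hrise r hr.le
    have hct := eq_apply_zero_add_of_forall_succ (f := c ∘ v) hrise t le_rfl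
    simp only [Function.comp_apply] at hcr hct
    rw [← ZMod.natCast_eq_zero_iff, Nat.cast_add, Nat.cast_sub hr.le]
    linear_combination hcr - hct - hcol
  · intro c' hreach i hri hit
    refine eqOn_of_reflTransGen_recolStep (S := {x | ∃ j, r ≤ j ∧ j ≤ t ∧ v j = x})
      ?_ hreach ⟨i, hri, hit, rfl⟩
    rintro _ ⟨k, hrk, hkt, rfl⟩ a ha
    rcases ZMod.three_eq_add_one_or_eq_sub_one_of_ne ha with rfl | rfl
    · obtain ⟨j, hrj, hjt, hadj, hj⟩ := exists_cycle_adj_add_one hpath hrise hchord hcol hrk hkt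
      exact ⟨v j, ⟨j, hrj, hjt, rfl⟩, hadj, hj⟩
    · obtain ⟨j, hrj, hjt, hadj, hj⟩ := exists_cycle_adj_sub_one hpath hrise hchord hcol hrk hkt
      exact ⟨v j, ⟨j, hrj, hjt, rfl⟩, hadj, hj⟩

/-- let `c` be a proper 3-colouring of `G` and let
`v 0, v 1, …, v t` be a rising path (colours increase by one mod 3 along the
path). If some `v r` with `r < t` is adjacent to `v t` and
`c (v r) = c (v t) + 1`, then `v r, …, v t` form a cycle coloured cyclically
`1,2,3` (so its length `t - r + 1` is divisible by 3) and all of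
`v r, …, v t` are fixed with respect to `c`: every proper 3-colouring reachable
from `c` by single-vertex recolourings agrees with `c` on them. -/
theorem stmt_19 {V : Type*} (G : SimpleGraph V) (c : V → ZMod 3)
    (hc : ProperColouring G c) (t r : ℕ) (hr : r < t)
    (v : ℕ → V)
    (hinj : ∀ i ≤ t, ∀ j ≤ t, v i = v j → i = j)
    (hpath : ∀ i < t, G.Adj (v i) (v (i + 1)))
    (hrise : ∀ i < t, c (v (i + 1)) = c (v i) + 1)
    (hchord : G.Adj (v r) (v t)) (hcol : c (v r) = c (v t) + 1) :
    3 ∣ (t - r + 1) ∧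
      ∀ c' : V → ZMod 3, Relation.ReflTransGen (RecolStep G) c c' →
        ∀ i : ℕ, r ≤ i → i ≤ t → c' (v i) = c (v i) :=
  stmt_19_general G c t r hr v hpath hrise hchord hcol
end
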